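/- arXiv:2204.00190 — 7 statements merged into one kernel-verified Lean document; each statement's English description precedes it below -/
import Mathlib

section
/- Let a, b ∈ ℂ² satisfy |a₁| = |b₁|, |a₂| = |b₂|, |a₁ - a₂| = |b₁ - b₂|, and |a₁ - i·a₂| = |b₁ - i·b₂|. Then the rank-one matrices agree: a·a* = b·b* (equivalently, a₁·conj(a₂) = b₁·conj(b₂)). -/
/-! Polarization: `‖z - w‖²` and `‖z - i w‖²` recover the real and imaginary parts of `z * conj w`
from `‖z‖` and `‖w‖`. Hence the off-diagonal entry `a₁ conj a₂` of `a a*` is determined by the four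
given norms, its transpose entry is its conjugate, and the diagonal entries are `‖aⱼ‖²`. -/

open ComplexConjugate

namespace Complex

theorem re_mul_conj_eq_polarization (z w : ℂ) :
    (z * conj w).re = (normSq z + normSq w - normSq (z - w)) / 2 := by
  rw [normSq_sub]
  ring

theorem im_mul_conj_eq_polarization (z w : ℂ) :
    (z * conj w).im = (normSq z + normSq w - normSq (z - I * w)) / 2 := by
  rw [normSq_sub, normSq_mul, normSq_I, map_mul, conj_I]
  simp only [mul_re, mul_im, neg_re, neg_im, I_re, I_im, conj_re, conj_im]
  ring

theorem normSq_eq_of_norm_eq {u v : ℂ} (h : ‖u‖ = ‖v‖) : normSq u = normSq v := by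
  rw [← Complex.sq_norm, ← Complex.sq_norm, h]

theorem mul_conj_eq_of_norm_eq {z w z' w' : ℂ} (hz : ‖z‖ = ‖z'‖) (hw : ‖w‖ = ‖w'‖)
    (hsub : ‖z - w‖ = ‖z' - w'‖) (hsubI : ‖z - I * w‖ = ‖z' - I * w'‖) :
    z * conj w = z' * conj w' := by
  apply Complex.ext
  · rw [re_mul_conj_eq_polarization, re_mul_conj_eq_polarization, normSq_eq_of_norm_eq hz,
      normSq_eq_of_norm_eq hw, normSq_eq_of_norm_eq hsub]
  · rw [im_mul_conj_eq_polarization, im_mul_conj_eq_polarization, normSq_eq_of_norm_eq hz,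
      normSq_eq_of_norm_eq hw, normSq_eq_of_norm_eq hsubI]

end Complex

open Complex

theorem outer_conj_eq_of_norm_eq_of_mul_conj_eq {a b : Fin 2 → ℂ} (h0 : ‖a 0‖ = ‖b 0‖)
    (h1 : ‖a 1‖ = ‖b 1‖) (h01 : a 0 * conj (a 1) = b 0 * conj (b 1)) :
    (fun j k : Fin 2 => a j * conj (a k)) = (fun j k : Fin 2 => b j * conj (b k)) := by
  have h10 : a 1 * conj (a 0) = b 1 * conj (b 0) := by
    simpa only [map_mul, conj_conj, mul_comm] using congrArg conj h01
  funext j k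
  match j, k with
  | 0, 0 => rw [mul_conj, mul_conj, normSq_eq_of_norm_eq h0]
  | 0, 1 => exact h01
  | 1, 0 => exact h10
  | 1, 1 => rw [mul_conj, mul_conj, normSq_eq_of_norm_eq h1]

/-- If two vectors in ℂ² have equal entrywise magnitudes, equal magnitude of the
difference of their entries, and equal magnitude of the `i`-twisted difference,
then the rank-one matrices `a a*` and `b b*` agree. -/
theorem stmt0 (a b : Fin 2 → ℂ)
    (h1 : ‖a 0‖ = ‖b 0‖)
    (h2 : ‖a 1‖ = ‖b 1‖)
    (h3 : ‖a 0 - a 1‖ = ‖b 0 - b 1‖)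
    (h4 : ‖a 0 - Complex.I * a 1‖ = ‖b 0 - Complex.I * b 1‖) :
    (fun j k : Fin 2 => a j * (starRingEnd ℂ) (a k)) =
      (fun j k : Fin 2 => b j * (starRingEnd ℂ) (b k)) :=
  outer_conj_eq_of_norm_eq_of_mul_conj_eq h1 h2 (mul_conj_eq_of_norm_eq h1 h2 h3 h4)
end

section
/- Let μ = c·δ_t with c ∈ ℂ, c ≠ 0, t ∈ [0,Λ], and let v₁, v₂ ∈ [-Ω,Ω] be distinct with Ω·Λ < 1/2. Then the four quantities |μ̂(v₁)|², |μ̂(v₂)|², |μ̂(v₁) - μ̂(v₂)|², |μ̂(v₁) - i·μ̂(v₂)|² determine μ up to a unimodular constant: if ν = c'·δ_{t'} with t' ∈ [0,Λ] produces the same four quantities, then t = t' and |c| = |c'|. -/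
open Complex Real

/-! The first measurement gives `‖c‖ = ‖c'‖`. By polarization the four measurements determine
`μ̂(v₁) · conj μ̂(v₂) = ‖c‖² e^{2πi (v₂ - v₁) t}`, so the phases `(v₂ - v₁) t` and `(v₂ - v₁) t'`
agree modulo `1`; they differ by at most `2ΩΛ < 1`, hence agree, and `v₁ ≠ v₂` gives `t = t'`. -/

open ComplexConjugate

theorem norm_mul_exp_neg_two_pi_I (c : ℂ) (ω t : ℝ) :
    ‖c * exp (-2 * π * I * ω * t)‖ = ‖c‖ := by
  rw [norm_mul, norm_exp]
  simp

theorem mul_conj_mul_exp_neg_two_pi_I (c : ℂ) (ω₁ ω₂ t : ℝ) :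
    c * exp (-2 * π * I * ω₁ * t) * conj (c * exp (-2 * π * I * ω₂ * t)) =
      ‖c‖ ^ 2 * exp (2 * π * I * ((ω₂ - ω₁) * t : ℝ)) := by
  rw [map_mul, ← exp_conj, mul_mul_mul_comm, ← Complex.exp_add, mul_conj, normSq_eq_norm_sq]
  push_cast
  simp only [map_mul, map_neg, map_ofNat, conj_ofReal, conj_I]
  ring_nf

theorem mul_conj_eq_of_sq_norm_eq {z w z' w' : ℂ} (h₁ : ‖z‖ ^ 2 = ‖z'‖ ^ 2)
    (h₂ : ‖w‖ ^ 2 = ‖w'‖ ^ 2) (h₃ : ‖z - w‖ ^ 2 = ‖z' - w'‖ ^ 2)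
    (h₄ : ‖z - I * w‖ ^ 2 = ‖z' - I * w'‖ ^ 2) :
    z * conj w = z' * conj w' := by
  simp only [Complex.sq_norm, normSq_apply, sub_re, sub_im, mul_re, mul_im, I_re, I_im] at *
  apply Complex.ext <;> simp only [mul_re, mul_im, conj_re, conj_im] <;> linarith

theorem eq_of_exp_two_pi_I_mul_eq {x y : ℝ} (h : exp (2 * π * I * x) = exp (2 * π * I * y))
    (hxy : |x - y| < 1) : x = y := by
  obtain ⟨n, hn⟩ := exp_eq_exp_iff_exists_int.mp h
  have hdiff : x - y = n := by
    have : ((x - y : ℝ) : ℂ) = n :=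
      mul_left_cancel₀ two_pi_I_ne_zero (by push_cast; linear_combination hn)
    exact_mod_cast this
  have hn0 : n = 0 := Int.abs_lt_one_iff.mp (by rw [hdiff] at hxy; exact_mod_cast hxy)
  rw [hn0, Int.cast_zero, sub_eq_zero] at hdiff
  exact hdiff

theorem abs_sub_mul_sub_lt_one {Λ Ω v₁ v₂ t t' : ℝ} (hΩΛ : Ω * Λ < 1 / 2)
    (hv₁ : v₁ ∈ Set.Icc (-Ω) Ω) (hv₂ : v₂ ∈ Set.Icc (-Ω) Ω)
    (ht : t ∈ Set.Icc 0 Λ) (ht' : t' ∈ Set.Icc 0 Λ) :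
    |(v₂ - v₁) * t - (v₂ - v₁) * t'| < 1 := by
  have hv : |v₂ - v₁| ≤ 2 * Ω := by
    rw [abs_sub_le_iff]; constructor <;> linarith [hv₁.1, hv₁.2, hv₂.1, hv₂.2]
  have ht : |t - t'| ≤ Λ := abs_sub_le_of_nonneg_of_le ht.1 ht.2 ht'.1 ht'.2
  calc |(v₂ - v₁) * t - (v₂ - v₁) * t'| = |v₂ - v₁| * |t - t'| := by rw [← mul_sub, abs_mul]
    _ ≤ 2 * Ω * Λ := mul_le_mul hv ht (abs_nonneg _) (by linarith [hv₁.1, hv₁.2])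
    _ < 1 := by linarith

theorem stmt5_general (Λ Ω : ℝ) (hΩΛ : Ω * Λ < 1 / 2)
    (c c' : ℂ) (hc : c ≠ 0) (t t' : ℝ) (ht : t ∈ Set.Icc 0 Λ) (ht' : t' ∈ Set.Icc 0 Λ)
    (v₁ v₂ : ℝ) (hv₁ : v₁ ∈ Set.Icc (-Ω) Ω) (hv₂ : v₂ ∈ Set.Icc (-Ω) Ω) (hv : v₁ ≠ v₂)
    (f g : ℝ → ℂ)
    (hf : ∀ ω, f ω = c * Complex.exp (-2 * π * I * ω * t))
    (hg : ∀ ω, g ω = c' * Complex.exp (-2 * π * I * ω * t'))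
    (m1 : ‖f v₁‖ ^ 2 = ‖g v₁‖ ^ 2)
    (m2 : ‖f v₂‖ ^ 2 = ‖g v₂‖ ^ 2)
    (m3 : ‖f v₁ - f v₂‖ ^ 2 = ‖g v₁ - g v₂‖ ^ 2)
    (m4 : ‖f v₁ - I * f v₂‖ ^ 2 = ‖g v₁ - I * g v₂‖ ^ 2) :
    t = t' ∧ ‖c‖ = ‖c'‖ := by
  have hnorm : ‖c‖ = ‖c'‖ := by
    rw [hf, hg, norm_mul_exp_neg_two_pi_I, norm_mul_exp_neg_two_pi_I] at m1
    exact (sq_eq_sq₀ (norm_nonneg c) (norm_nonneg c')).mp m1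
  refine ⟨?_, hnorm⟩
  have hprod := mul_conj_eq_of_sq_norm_eq m1 m2 m3 m4
  rw [hf, hf, hg, hg, mul_conj_mul_exp_neg_two_pi_I, mul_conj_mul_exp_neg_two_pi_I,
    ← hnorm] at hprod
  have hphase := mul_left_cancel₀ (by simpa using hc) hprod
  have hmul := eq_of_exp_two_pi_I_mul_eq hphase (abs_sub_mul_sub_lt_one hΩΛ hv₁ hv₂ ht ht')
  exact mul_left_cancel₀ (sub_ne_zero.mpr hv.symm) hmul

/-- A single Dirac measure `μ = c δ_t`, `c ≠ 0`, is determined up to a unimodular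
constant by the four magnitude measurements at two distinct points of `[-Ω,Ω]`
when `ΩΛ < 1/2`: any `ν = c' δ_{t'}` producing the same data has `t = t'` and `|c| = |c'|`. -/
theorem stmt5 (Λ Ω : ℝ) (hΛ : 0 < Λ) (hΩ : 0 < Ω) (hΩΛ : Ω * Λ < 1 / 2)
    (c c' : ℂ) (hc : c ≠ 0) (t t' : ℝ) (ht : t ∈ Set.Icc 0 Λ) (ht' : t' ∈ Set.Icc 0 Λ)
    (v₁ v₂ : ℝ) (hv₁ : v₁ ∈ Set.Icc (-Ω) Ω) (hv₂ : v₂ ∈ Set.Icc (-Ω) Ω) (hv : v₁ ≠ v₂)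
    (f g : ℝ → ℂ)
    (hf : ∀ ω, f ω = c * Complex.exp (-2 * π * I * ω * t))
    (hg : ∀ ω, g ω = c' * Complex.exp (-2 * π * I * ω * t'))
    (m1 : ‖f v₁‖ ^ 2 = ‖g v₁‖ ^ 2)
    (m2 : ‖f v₂‖ ^ 2 = ‖g v₂‖ ^ 2)
    (m3 : ‖f v₁ - f v₂‖ ^ 2 = ‖g v₁ - g v₂‖ ^ 2)
    (m4 : ‖f v₁ - I * f v₂‖ ^ 2 = ‖g v₁ - I * g v₂‖ ^ 2) :
    t = t' ∧ ‖c‖ = ‖c'‖ :=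
  stmt5_general Λ Ω hΩΛ c c' hc t t' ht ht' v₁ v₂ hv₁ hv₂ hv f g hf hg m1 m2 m3 m4
end

section
/- (Discrete Cheeger inequality, easy direction) Let Γ be a finite connected nonempty d-regular graph with normalized Laplacian L_Γ and normalized spectral gap λ₁(Γ) (the smallest nonzero eigenvalue of L_Γ). Then λ₁(Γ) ≤ (2/d)·h(Γ), where h(Γ) is the edge expansion constant. -/
/-!
The centered indicator `f = 𝟙_W - |W|/|V|` is orthogonal to the kernel of `L_Γ = d⁻¹ (D - A)`,
which for a connected graph consists of the constants. Expanding `f` in an orthonormal eigenbasis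
of `L_Γ` gives `λ₁ ‖f‖² ≤ ⟨f, L_Γ f⟩ = |E(W)| / d`, while `‖f‖² = |W| (1 - |W|/|V|) ≥ |W| / 2`.
-/

open Finset Matrix

theorem LinearMap.IsSymmetric.mul_inner_self_le_inner_apply_of_mem_orthogonal_ker
    {E : Type*} [NormedAddCommGroup E] [InnerProductSpace ℝ E] [FiniteDimensional ℝ E]
    {T : E →ₗ[ℝ] E} (hT : T.IsSymmetric) {lam : ℝ}
    (hlam : ∀ μ, Module.End.HasEigenvalue T μ → μ ≠ 0 → lam ≤ μ)
    {f : E} (hf : f ∈ (LinearMap.ker T)ᗮ) :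
    lam * inner ℝ f f ≤ inner ℝ f (T f) := by
  set b := hT.eigenvectorBasis rfl
  set μ := hT.eigenvalues rfl
  rw [← b.sum_inner_mul_inner f f, ← b.sum_inner_mul_inner f (T f), mul_sum]
  refine sum_le_sum fun i _ => ?_
  have hb : T (b i) = μ i • b i := hT.apply_eigenvectorBasis rfl i
  have hTb : inner ℝ (b i) (T f) = μ i * inner ℝ (b i) f := by
    rw [← hT, hb, real_inner_smul_left]
  rw [hTb, real_inner_comm (b i) f]
  by_cases hμ : μ i = 0
  · have hker : b i ∈ LinearMap.ker T := by
      rw [LinearMap.mem_ker, hb, hμ, zero_smul]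
    simp [(Submodule.mem_orthogonal _ f).mp hf _ hker]
  · have hle : lam ≤ μ i := hlam _ (hT.hasEigenvalue_eigenvalues rfl i) hμ
    nlinarith [mul_le_mul_of_nonneg_right hle (mul_self_nonneg (inner ℝ (b i) f))]

theorem Matrix.hasEigenvalue_toLpLin_iff {𝕜 n : Type*} [RCLike 𝕜] [Fintype n] [DecidableEq n]
    (p : ENNReal) (A : Matrix n n 𝕜) (μ : 𝕜) :
    Module.End.HasEigenvalue (toLpLin p p A) μ ↔ Module.End.HasEigenvalue (toLin' A) μ := by
  simp only [Module.End.hasEigenvalue_iff_mem_spectrum, spectrum_toLpLin, spectrum_toLin']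

theorem Matrix.IsHermitian.mul_dotProduct_self_le {n : Type*} [Fintype n] [DecidableEq n]
    {A : Matrix n n ℝ} (hA : A.IsHermitian) {lam : ℝ}
    (hlam : ∀ μ, Module.End.HasEigenvalue (toLin' A) μ → μ ≠ 0 → lam ≤ μ)
    {f : n → ℝ} (hf : ∀ x, A *ᵥ x = 0 → x ⬝ᵥ f = 0) :
    lam * (f ⬝ᵥ f) ≤ f ⬝ᵥ (A *ᵥ f) := by
  have hf' : WithLp.toLp 2 f ∈ (LinearMap.ker (toEuclideanLin A))ᗮ := by
    refine (Submodule.mem_orthogonal _ _).mpr fun u hu => ?_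
    rw [LinearMap.mem_ker, toLpLin_apply, WithLp.toLp_eq_zero] at hu
    rw [EuclideanSpace.inner_eq_star_dotProduct, star_trivial, dotProduct_comm]
    exact hf _ hu
  have := (isSymmetric_toEuclideanLin_iff.mpr hA).mul_inner_self_le_inner_apply_of_mem_orthogonal_ker
    (fun μ hμ => hlam μ ((hasEigenvalue_toLpLin_iff 2 A μ).mp hμ)) hf'
  rwa [toLpLin_toLp, EuclideanSpace.inner_toLp_toLp, EuclideanSpace.inner_toLp_toLp, star_trivial,
    toLin'_apply, dotProduct_comm (A *ᵥ f)] at this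

namespace Finset

variable {V : Type*} [Fintype V]

theorem card_mul_div_card_univ (W : Finset V) :
    (Fintype.card V : ℝ) * (#W / Fintype.card V) = #W := by
  rcases isEmpty_or_nonempty V with hV | hV
  · simp [Finset.eq_empty_of_isEmpty W]
  · exact mul_div_cancel₀ _ (by positivity)

variable [DecidableEq V]

noncomputable def centeredIndicator (W : Finset V) (v : V) : ℝ :=
  (if v ∈ W then 1 else 0) - #W / Fintype.card V

theorem sum_centeredIndicator (W : Finset V) : ∑ v, W.centeredIndicator v = 0 := by
  simp only [centeredIndicator, sum_sub_distrib, sum_boole, sum_const, card_univ, nsmul_eq_mul,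
    card_mul_div_card_univ, filter_mem_eq_inter, univ_inter, sub_self]

theorem dotProduct_self_centeredIndicator (W : Finset V) :
    W.centeredIndicator ⬝ᵥ W.centeredIndicator = #W * (1 - #W / Fintype.card V) := by
  set c : ℝ := #W / Fintype.card V
  have hsq : ∀ v, W.centeredIndicator v * W.centeredIndicator v
      = (if v ∈ W then 1 else 0) * (1 - 2 * c) + c * c := by
    intro v
    by_cases hv : v ∈ W <;> simp [centeredIndicator, hv, c]; ring
  simp only [dotProduct, hsq, sum_add_distrib, ← sum_mul, sum_boole, sum_const, card_univ,
    nsmul_eq_mul, card_mul_div_card_univ, filter_mem_eq_inter, univ_inter, c]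
  ring

end Finset

namespace SimpleGraph

variable {V : Type*} [Fintype V] [DecidableEq V] {G : SimpleGraph V} [DecidableRel G.Adj]

theorem IsRegularOfDegree.one_sub_inv_smul_adjMatrix {d : ℕ}
    (hreg : G.IsRegularOfDegree d) (hd : d ≠ 0) :
    (1 : Matrix V V ℝ) - (d : ℝ)⁻¹ • G.adjMatrix ℝ = (d : ℝ)⁻¹ • G.lapMatrix ℝ := by
  have hdeg : G.degMatrix ℝ = (d : ℝ) • 1 := by
    rw [degMatrix, smul_one_eq_diagonal]
    exact congrArg diagonal (funext fun v => congrArg Nat.cast (hreg v))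
  rw [lapMatrix, hdeg, smul_sub, smul_smul, inv_mul_cancel₀ (by exact_mod_cast hd), one_smul]

theorem Connected.dotProduct_eq_zero_of_lapMatrix_mulVec_eq_zero
    (hG : G.Connected) {x f : V → ℝ} (hx : G.lapMatrix ℝ *ᵥ x = 0) (hf : ∑ v, f v = 0) :
    x ⬝ᵥ f = 0 := by
  obtain ⟨v₀⟩ := hG.nonempty
  have hconst : ∀ v, x v = x v₀ := fun v =>
    G.lapMatrix_mulVec_eq_zero_iff_forall_reachable.mp hx v v₀ (hG v v₀)
  simp only [dotProduct, hconst, ← mul_sum, hf, mul_zero]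

variable (G)

theorem sum_adj_sq_sub_indicator (W : Finset V) :
    ∑ i, ∑ j, (if G.Adj i j then
      ((if i ∈ W then 1 else 0) - (if j ∈ W then 1 else 0) : ℝ) ^ 2 else 0) =
      2 * #{p : V × V | p.1 ∈ W ∧ p.2 ∉ W ∧ G.Adj p.1 p.2} := by
  have hcount : (#{p : V × V | p.1 ∈ W ∧ p.2 ∉ W ∧ G.Adj p.1 p.2} : ℝ) =
      ∑ i, ∑ j, if i ∈ W ∧ j ∉ W ∧ G.Adj i j then 1 else 0 := by
    rw [← Fintype.sum_prod_type', ← sum_boole]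
  have hterm : ∀ i j, (if G.Adj i j then
      ((if i ∈ W then 1 else 0) - (if j ∈ W then 1 else 0) : ℝ) ^ 2 else 0) =
      (if i ∈ W ∧ j ∉ W ∧ G.Adj i j then 1 else 0) +
        (if j ∈ W ∧ i ∉ W ∧ G.Adj j i then 1 else 0) := by
    intro i j
    by_cases hi : i ∈ W <;> by_cases hj : j ∈ W <;> by_cases hij : G.Adj i j <;>
      simp [hi, hj, hij, G.adj_comm j i]
  simp only [hterm, sum_add_distrib]
  rw [sum_comm (f := fun i j => if j ∈ W ∧ i ∉ W ∧ G.Adj j i then (1 : ℝ) else 0), hcount]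
  ring

theorem dotProduct_lapMatrix_mulVec_centeredIndicator (W : Finset V) :
    W.centeredIndicator ⬝ᵥ (G.lapMatrix ℝ *ᵥ W.centeredIndicator) =
      #{p : V × V | p.1 ∈ W ∧ p.2 ∉ W ∧ G.Adj p.1 p.2} := by
  rw [← toLinearMap₂'_apply', lapMatrix_toLinearMap₂']
  simp only [centeredIndicator, sub_sub_sub_cancel_right, sum_adj_sq_sub_indicator]
  ring

end SimpleGraph

theorem stmt7_general {V : Type*} [Fintype V] [DecidableEq V]
    (G : SimpleGraph V) [DecidableRel G.Adj] (hconn : G.Connected)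
    (d : ℕ) (hd : 0 < d) (hreg : G.IsRegularOfDegree d)
    (lam : ℝ)
    (hmin : ∀ μ : ℝ, Module.End.HasEigenvalue
      (Matrix.toLin' ((1 : Matrix V V ℝ) - (d : ℝ)⁻¹ • G.adjMatrix ℝ)) μ → μ ≠ 0 → lam ≤ μ) :
    ∀ W : Finset V, W.Nonempty → 2 * W.card ≤ Fintype.card V →
      lam ≤ (2 / d) *
        (((Finset.univ.filter
            (fun p : V × V => p.1 ∈ W ∧ p.2 ∉ W ∧ G.Adj p.1 p.2)).card : ℝ) / W.card) := by
  intro W hW hW2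
  have hd' : (0 : ℝ) < d := by exact_mod_cast hd
  have hk : (0 : ℝ) < #W := by exact_mod_cast hW.card_pos
  have hhalf : (1 / 2 : ℝ) ≤ 1 - #W / Fintype.card V := by
    have hn : (0 : ℝ) < Fintype.card V := by exact_mod_cast hW.card_pos.trans_le (card_le_univ W)
    rw [le_sub_comm, div_le_iff₀ hn]
    linarith [show (2 * #W : ℝ) ≤ Fintype.card V by exact_mod_cast hW2]
  rw [hreg.one_sub_inv_smul_adjMatrix hd.ne'] at hmin
  have hker : ∀ x, ((d : ℝ)⁻¹ • G.lapMatrix ℝ) *ᵥ x = 0 → x ⬝ᵥ W.centeredIndicator = 0 := by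
    intro x hx
    rw [smul_mulVec, smul_eq_zero_iff_right (inv_ne_zero hd'.ne')] at hx
    exact hconn.dotProduct_eq_zero_of_lapMatrix_mulVec_eq_zero hx W.sum_centeredIndicator
  have hrayleigh :=
    ((G.isHermitian_lapMatrix ℝ).smul (IsSelfAdjoint.all _)).mul_dotProduct_self_le hmin hker
  rw [smul_mulVec, dotProduct_smul, smul_eq_mul, G.dotProduct_lapMatrix_mulVec_centeredIndicator,
    W.dotProduct_self_centeredIndicator] at hrayleigh
  rcases le_or_gt lam 0 with hlam | hlam
  · exact hlam.trans (by positivity)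
  rw [mul_div_assoc', le_div_iff₀ hk]
  calc lam * #W = 2 * (lam * (#W * (1 / 2))) := by ring
    _ ≤ 2 * (lam * (#W * (1 - #W / Fintype.card V))) := by gcongr
    _ ≤ 2 * ((d : ℝ)⁻¹ * _) := by gcongr
    _ = 2 / d * _ := by ring

/-- Discrete Cheeger inequality (easy direction) for a `d`-regular connected graph:
the smallest nonzero eigenvalue `lam` of the normalized Laplacian
`L = 1 - (1/d)·A` satisfies `lam ≤ (2/d)·|E(W)|/|W|` for every nonempty
`W ⊆ V` with `|W| ≤ |V|/2`, i.e. `lam ≤ (2/d)·h(Γ)`.  The edge boundary is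
counted via ordered pairs `(v, w)` with `v ∈ W`, `w ∉ W`, `v ∼ w`. -/
theorem stmt7 {V : Type*} [Fintype V] [DecidableEq V] [Nonempty V]
    (G : SimpleGraph V) [DecidableRel G.Adj] (hconn : G.Connected)
    (d : ℕ) (hd : 0 < d) (hreg : G.IsRegularOfDegree d)
    (lam : ℝ)
    (heig : Module.End.HasEigenvalue
      (Matrix.toLin' ((1 : Matrix V V ℝ) - (d : ℝ)⁻¹ • G.adjMatrix ℝ)) lam)
    (hne : lam ≠ 0)
    (hmin : ∀ μ : ℝ, Module.End.HasEigenvalue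
      (Matrix.toLin' ((1 : Matrix V V ℝ) - (d : ℝ)⁻¹ • G.adjMatrix ℝ)) μ → μ ≠ 0 → lam ≤ μ) :
    ∀ W : Finset V, W.Nonempty → 2 * W.card ≤ Fintype.card V →
      lam ≤ (2 / d) *
        (((Finset.univ.filter
            (fun p : V × V => p.1 ∈ W ∧ p.2 ∉ W ∧ G.Adj p.1 p.2)).card : ℝ) / W.card) :=
  stmt7_general G hconn d hd hreg lam hmin
end

section
/- Let Γ = (V,E) be a finite graph such that every subset W ⊆ V with |W| ≤ |V|/2 that is disconnected from its complement (after some fixed edge removal) satisfies |W| < |V|/3. Then there exists a connected component of the edge-removed graph with more than 2|V|/3 vertices. -/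
/-! If no component had more than `2|V|/3` vertices, every component would be a separated set of
size `< |V|/3`. A separated set of size at most `2|V|/3` has size `< |V|/3`: either it is at most
`|V|/2`, or its (also separated) complement is smaller than `|V|/2`, hence smaller than `|V|/3`.
So adding one component at a time to a separated set of size `< |V|/3` keeps it below `|V|/3`,
and exhausting all components gives `|V| < |V|/3`, which is absurd. -/

namespace SimpleGraph

variable {V : Type*} (G : SimpleGraph V)

def IsSeparated (W : Set V) : Prop :=
  ∀ v ∈ W, ∀ w ∉ W, ¬ G.Adj v w

variable {G}

theorem IsSeparated.compl {W : Set V} (hW : G.IsSeparated W) : G.IsSeparated Wᶜ :=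
  fun v hv w hw hadj => hW w (not_not.mp hw) v hv hadj.symm

theorem isSeparated_iUnion {ι : Sort*} {f : ι → Set V} (hf : ∀ i, G.IsSeparated (f i)) :
    G.IsSeparated (⋃ i, f i) := by
  rintro v hv w hw
  obtain ⟨i, hvi⟩ := Set.mem_iUnion.mp hv
  exact hf i v hvi w fun hwi => hw (Set.mem_iUnion_of_mem i hwi)

theorem ConnectedComponent.isSeparated_supp (C : G.ConnectedComponent) : G.IsSeparated C.supp :=
  fun _ hv _ hw hadj => hw (C.mem_supp_of_adj_mem_supp hv hadj)

section Thirds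

variable [Fintype V]

theorem IsSeparated.ncard_lt_third
    (H : ∀ W : Set V, G.IsSeparated W →
      (W.ncard : ℝ) ≤ (Fintype.card V : ℝ) / 2 → (W.ncard : ℝ) < (Fintype.card V : ℝ) / 3)
    {W : Set V} (hW : G.IsSeparated W)
    (hW_le : (W.ncard : ℝ) ≤ 2 * (Fintype.card V : ℝ) / 3) :
    (W.ncard : ℝ) < (Fintype.card V : ℝ) / 3 := by
  have hsum : (W.ncard : ℝ) + Wᶜ.ncard = Fintype.card V := by
    exact_mod_cast (Set.ncard_add_ncard_compl W).trans Nat.card_eq_fintype_card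
  by_cases hW_half : (W.ncard : ℝ) ≤ (Fintype.card V : ℝ) / 2
  · exact H W hW hW_half
  · have := H Wᶜ hW.compl (by linarith)
    linarith

theorem ncard_biUnion_lt_third
    (H : ∀ W : Set V, G.IsSeparated W →
      (W.ncard : ℝ) ≤ (Fintype.card V : ℝ) / 2 → (W.ncard : ℝ) < (Fintype.card V : ℝ) / 3)
    {ι : Type*} [DecidableEq ι] (s : Finset ι) {f : ι → Set V}
    (hsep : ∀ i, G.IsSeparated (f i))
    (hsmall : ∀ i, ((f i).ncard : ℝ) < (Fintype.card V : ℝ) / 3) :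
    ((⋃ i ∈ s, f i).ncard : ℝ) < (Fintype.card V : ℝ) / 3 := by
  have hsep' (t : Finset ι) : G.IsSeparated (⋃ i ∈ t, f i) :=
    isSeparated_iUnion fun i => isSeparated_iUnion fun _ => hsep i
  induction s using Finset.induction_on with
  | empty =>
    refine (hsep' ∅).ncard_lt_third H ?_
    simp only [Finset.notMem_empty, Set.iUnion_of_empty, Set.iUnion_empty, Set.ncard_empty,
      Nat.cast_zero]
    positivity
  | insert i s _ ih =>
    refine (hsep' _).ncard_lt_third H ?_
    rw [Finset.set_biUnion_insert]
    have hunion : ((f i ∪ ⋃ j ∈ s, f j).ncard : ℝ) ≤ (f i).ncard + (⋃ j ∈ s, f j).ncard := by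
      exact_mod_cast Set.ncard_union_le _ _
    linarith [hsmall i]

end Thirds

end SimpleGraph

/-- If in a graph (thought of as the graph after an edge removal) every vertex
set `W` with no edges to its complement and `|W| ≤ |V|/2` satisfies `|W| < |V|/3`,
then some connected component has more than `2|V|/3` vertices. -/
theorem stmt9 {V : Type*} [Fintype V] (G : SimpleGraph V)
    (H : ∀ W : Set V, (∀ v ∈ W, ∀ w ∉ W, ¬ G.Adj v w) →
        (W.ncard : ℝ) ≤ (Fintype.card V : ℝ) / 2 →
        (W.ncard : ℝ) < (Fintype.card V : ℝ) / 3) :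
    ∃ K : G.ConnectedComponent, (2 * (Fintype.card V : ℝ)) / 3 < (K.supp.ncard : ℝ) := by
  classical
  by_contra! hlarge
  have hcover : (⋃ v ∈ Finset.univ, (G.connectedComponentMk v).supp) = Set.univ :=
    Set.eq_univ_of_forall fun v => Set.mem_biUnion (Finset.mem_univ v) rfl
  have hlt := SimpleGraph.ncard_biUnion_lt_third H Finset.univ
    (fun v => (G.connectedComponentMk v).isSeparated_supp)
    fun v => (G.connectedComponentMk v).isSeparated_supp.ncard_lt_third H (hlarge _)
  rw [hcover, Set.ncard_univ, Nat.card_eq_fintype_card] at hlt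
  linarith
end

section
/- (Uniqueness of the Prony polynomial) Let z₁,...,z_s be distinct nonzero complex numbers, c₁,...,c_s nonzero, h_k = Σ_{j=1}^s c_j z_j^k, and m ≥ s. If a monic polynomial q of degree s satisfies Σ_{l=0}^s q_l h_{k+l} = 0 for all k ∈ {1,...,m}, then q(z) = ∏_{j=1}^s (z - z_j). -/
open Polynomial

/-!
Pairing the coefficients of `q` with the moments `h_k = ∑ c_j z_j ^ k` turns each annihilation
equation into `∑_j c_j q(z_j) z_j ^ k = 0`. For `k = 1, …, s` these are `s` equations whose
matrix is an invertible Vandermonde matrix (the `z_j` are distinct and nonzero), so every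
`c_j q(z_j)` vanishes and, as `c_j ≠ 0`, each `z_j` is a root of `q`. A monic polynomial of
degree `s` with `s` distinct prescribed roots is their product of linear factors.
-/

namespace Polynomial

theorem sum_coeff_mul_sum_mul_pow_add {R ι : Type*} [CommSemiring R] (t : Finset ι)
    (c z : ι → R) {q : R[X]} {n : ℕ} (hq : q.natDegree ≤ n) (k : ℕ) :
    ∑ l ∈ Finset.range (n + 1), q.coeff l * ∑ j ∈ t, c j * z j ^ (k + l) =
      ∑ j ∈ t, c j * q.eval (z j) * z j ^ k := by
  simp_rw [eval_eq_sum_range' (Nat.lt_succ_of_le hq), Finset.mul_sum, Finset.sum_mul]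
  rw [Finset.sum_comm]
  refine Finset.sum_congr rfl fun j _ => Finset.sum_congr rfl fun l _ => ?_
  ring

theorem Monic.eq_prod_X_sub_C_of_injective {R ι : Type*} [CommRing R] [IsDomain R] [Fintype ι]
    {z : ι → R} (hz : Function.Injective z) {q : R[X]} (hq : q.Monic)
    (hdeg : q.natDegree = Fintype.card ι) (hroot : ∀ i, q.eval (z i) = 0) :
    q = ∏ i, (X - C (z i)) := by
  have hprod : (∏ i, (X - C (z i))).natDegree = Fintype.card ι := by
    simp [natDegree_prod_of_monic _ _ fun i _ => monic_X_sub_C (z i)]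
  refine eq_of_degree_le_of_eval_index_eq Finset.univ hz.injOn ?_ ?_ ?_ ?_
  · rw [degree_eq_natDegree hq.ne_zero, hdeg, Finset.card_univ]
  · rw [degree_eq_natDegree hq.ne_zero, degree_eq_natDegree (monic_prod_X_sub_C z _).ne_zero,
      hdeg, hprod]
  · rw [hq.leadingCoeff, (monic_prod_X_sub_C z _).leadingCoeff]
  · intro i _
    rw [hroot, eval_prod, Finset.prod_eq_zero (Finset.mem_univ i) (by simp)]

end Polynomial

namespace Matrix

theorem eq_zero_of_forall_sum_mul_pow_succ_eq_zero {R : Type*} [CommRing R] [IsDomain R] {n : ℕ}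
    {z w : Fin n → R} (hz : Function.Injective z) (hz0 : ∀ j, z j ≠ 0)
    (hw : ∀ k < n, ∑ j, w j * z j ^ (k + 1) = 0) : w = 0 := by
  have hwz : (fun j => w j * z j) = 0 :=
    eq_zero_of_forall_pow_sum_mul_pow_eq_zero hz fun k => by
      simpa only [mul_assoc, ← pow_succ'] using hw k k.isLt
  funext j
  exact (mul_eq_zero.mp (congrFun hwz j)).resolve_right (hz0 j)

end Matrix

/-- Uniqueness of the Prony polynomial: if a monic polynomial `q` of degree `s`
annihilates the moments `h_k = ∑_j c_j z_j^k` for `k ∈ {1,…,m}` with `m ≥ s`,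
distinct nonzero `z_j` and nonzero `c_j`, then `q = ∏_j (X - z_j)`. -/
theorem stmt17 (s m : ℕ) (hm : s ≤ m) (z : Fin s → ℂ) (hz : Function.Injective z)
    (hz0 : ∀ j, z j ≠ 0) (c : Fin s → ℂ) (hc : ∀ j, c j ≠ 0)
    (q : ℂ[X]) (hqm : q.Monic) (hdeg : q.natDegree = s)
    (hann : ∀ k ∈ Finset.Icc 1 m, ∑ l ∈ Finset.range (s + 1),
      q.coeff l * ∑ j, c j * z j ^ (k + l) = 0) :
    q = ∏ j, (X - C (z j)) := by
  have hweights : (fun j => c j * q.eval (z j)) = 0 := by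
    refine Matrix.eq_zero_of_forall_sum_mul_pow_succ_eq_zero hz hz0 fun k hk => ?_
    rw [← sum_coeff_mul_sum_mul_pow_add _ _ _ hdeg.le]
    exact hann (k + 1) (Finset.mem_Icc.mpr ⟨by omega, by omega⟩)
  refine hqm.eq_prod_X_sub_C_of_injective hz (by rw [hdeg, Fintype.card_fin]) fun j => ?_
  exact (mul_eq_zero.mp (congrFun hweights j)).resolve_left (hc j)
end

section
/- (Tao's uncertainty principle corollary, restricted-support Fourier invertibility) Let p be prime, G = ℤ/p, and let S, S̃ ⊆ G with |S| = |S̃|. Then the linear map F: ℓ²(S) → ℓ²(S̃) given by restricting the Fourier transform f̂(ξ) = (1/p)·Σ_{x∈G} f(x) e^{2πi x ξ / p} to frequencies in S̃ is invertible, where ℓ²(S) is the space of functions on G vanishing outside S. -/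
open Polynomial

/-- `X * d/dX` applied to a monomial. -/
private lemma xmul_deriv {R : Type*} [CommRing R] (a : R) (k : ℕ) :
    X * derivative (C a * X ^ k) = C (a * (k : R)) * X ^ k := by
  cases k with
  | zero => simp
  | succ m =>
    rw [derivative_C_mul, derivative_X_pow, map_mul]
    push_cast
    ring_nf

/-- Tao's lemma: a nonzero polynomial over `ZMod p` with at most `n` nonzero
terms, whose exponents are distinct mod `p`, cannot vanish to order `n` at `1`. -/
private lemma tao_lemma {p : ℕ} [Fact p.Prime] :
    ∀ (n : ℕ) (b : Fin n → ZMod p), Function.Injective b →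
      ∀ (c : Fin n → ZMod p),
      ((X - 1 : (ZMod p)[X]) ^ n ∣ ∑ j, C (c j) * X ^ (b j).val) →
      ∀ j, c j = 0 := by
  intro n
  induction n with
  | zero => intro b _ c _ j; exact absurd j.2 (by simp)
  | succ n ih =>
    intro b hb c hdvd
    obtain ⟨h, hh⟩ := hdvd
    set f : (ZMod p)[X] := ∑ j, C (c j) * X ^ (b j).val with hfdef
    have hval : ∀ j : Fin (n+1), (((b j).val : ℕ) : ZMod p) = b j := fun j => by
      rw [ZMod.natCast_val, ZMod.cast_id]
    have hg : X * derivative f - C (b 0) * f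
        = ∑ j, C (c j * (b j - b 0)) * X ^ (b j).val := by
      rw [hfdef, derivative_sum, Finset.mul_sum, Finset.mul_sum,
        ← Finset.sum_sub_distrib]
      refine Finset.sum_congr rfl fun j _ => ?_
      rw [xmul_deriv, hval j]
      simp only [map_mul, map_sub]
      ring
    have hgdvd : (X - 1 : (ZMod p)[X]) ^ n ∣
        ∑ j, C (c j * (b j - b 0)) * X ^ (b j).val := by
      rw [← hg]
      refine ⟨X * C ((n+1 : ℕ) : ZMod p) * h + X * (X - 1) * derivative h
        - C (b 0) * ((X - 1) * h), ?_⟩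
      rw [hh]
      rw [derivative_mul, derivative_pow]
      simp only [derivative_sub, derivative_X, derivative_one, sub_zero,
        Nat.add_sub_cancel, mul_one, Nat.cast_add, Nat.cast_one]
      ring
    have hsum : ∑ j, C (c j * (b j - b 0)) * X ^ (b j).val
        = ∑ j : Fin n, C ((c j.succ * (b j.succ - b 0))) * X ^ ((b j.succ)).val := by
      rw [Fin.sum_univ_succ]
      simp
    have hsucc : ∀ j : Fin n, c j.succ = 0 := by
      intro j
      have := ih (fun j => b j.succ) (fun j₁ j₂ hj => by
          have := hb hj
          exact Fin.succ_injective n this)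
        (fun j => c j.succ * (b j.succ - b 0)) (by rw [← hsum]; exact hgdvd) j
      rcases mul_eq_zero.mp this with h' | h'
      · exact h'
      · exact absurd (sub_eq_zero.mp h')
          (fun h'' => (Fin.succ_ne_zero j) (hb h''))
    have hf1 : f = C (c 0) * X ^ (b 0).val := by
      rw [hfdef, Fin.sum_univ_succ]
      simp [hsucc]
    have heval : f.eval 1 = 0 := by
      rw [hh]
      simp
    have : c 0 = 0 := by
      rw [hf1] at heval
      simpa using heval
    intro j
    refine Fin.cases this hsucc j

/-- Descent: from a nonzero kernel vector, produce a kernel vector with some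
coordinate not divisible by a fixed prime element `π`. -/
private lemma descent {A : Type*} [CommRing A] [IsDomain A] [WfDvdMonoid A]
    {π : A} (hπ0 : π ≠ 0) (hπ : ¬IsUnit π) {n : ℕ} {M : Matrix (Fin n) (Fin n) A}
    {v : Fin n → A} (hv : v ≠ 0) (hMv : M.mulVec v = 0) :
    ∃ w : Fin n → A, M.mulVec w = 0 ∧ ∃ j, ¬ π ∣ w j := by
  obtain ⟨j₀, hj₀⟩ := Function.ne_iff.mp hv
  simp only [Pi.zero_apply] at hj₀
  suffices H : ∀ u : A, ∀ v : Fin n → A, v j₀ = u → v j₀ ≠ 0 → M.mulVec v = 0 →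
      ∃ w : Fin n → A, M.mulVec w = 0 ∧ ∃ j, ¬ π ∣ w j from
    H (v j₀) v rfl hj₀ hMv
  intro u
  refine WellFounded.induction wellFounded_dvdNotUnit
    (C := fun u => ∀ v : Fin n → A, v j₀ = u → v j₀ ≠ 0 → M.mulVec v = 0 →
      ∃ w : Fin n → A, M.mulVec w = 0 ∧ ∃ j, ¬ π ∣ w j) u ?_
  rintro u IH v rfl hne hMv
  by_cases hall : ∀ j, π ∣ v j
  · choose w hw using hall
    have hMw : M.mulVec w = 0 := by
      funext i
      have h2 : π * (M.mulVec w) i = 0 := by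
        have h3 : M.mulVec v i = 0 := congrFun hMv i
        rw [← h3]
        simp only [Matrix.mulVec, dotProduct, Finset.mul_sum]
        exact (Finset.sum_congr rfl fun j _ => by rw [hw j]; ring).symm
      rcases mul_eq_zero.mp h2 with h' | h'
      · exact absurd h' hπ0
      · simpa using h'
    have hwj : w j₀ ≠ 0 := fun h0 => hne (by rw [hw j₀, h0, mul_zero])
    exact IH (w j₀) ⟨hwj, π, hπ, by rw [hw j₀]; ring⟩ w rfl hwj hMw
  · exact ⟨v, hMv, not_forall.mp hall⟩

/-- Chebotarëv's theorem on roots of unity: every minor of the DFT matrix of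
prime order is nonzero. -/
private lemma chebotarev (p : ℕ) (hp : p.Prime) {n : ℕ} (a b : Fin n → ZMod p)
    (ha : Function.Injective a) (hb : Function.Injective b) :
    (Matrix.of fun i j : Fin n =>
      Complex.exp (2 * Real.pi * Complex.I / p) ^ ((a i).val * (b j).val)).det ≠ 0 := by
  haveI : Fact p.Prime := ⟨hp⟩
  haveI : NeZero p := ⟨hp.ne_zero⟩
  set ζ : ℂ := Complex.exp (2 * Real.pi * Complex.I / p) with hζdef
  have hζ : IsPrimitiveRoot ζ p := Complex.isPrimitiveRoot_exp p hp.ne_zero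
  set Φ : ℤ[X] := cyclotomic p ℤ with hΦdef
  have hΦirr : Irreducible Φ := cyclotomic.irreducible hp.pos
  haveI : IsDomain (AdjoinRoot Φ) :=
    AdjoinRoot.isDomain_of_prime (UniqueFactorizationMonoid.irreducible_iff_prime.mp hΦirr)
  haveI : IsNoetherianRing (AdjoinRoot Φ) :=
    isNoetherianRing_of_surjective _ _ (AdjoinRoot.mk Φ) AdjoinRoot.mk_surjective
  haveI : WfDvdMonoid (AdjoinRoot Φ) := IsNoetherianRing.wfDvdMonoid
  -- the embedding into ℂ
  have hζroot : Φ.eval₂ (Int.castRingHom ℂ) ζ = 0 := by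
    rw [hΦdef, eval₂_eq_eval_map, map_cyclotomic_int]
    exact hζ.isRoot_cyclotomic hp.pos
  set ψ : AdjoinRoot Φ →+* ℂ := AdjoinRoot.lift (Int.castRingHom ℂ) ζ hζroot with hψdef
  set θ : AdjoinRoot Φ := AdjoinRoot.root Φ with hθdef
  have hψθ : ψ θ = ζ := AdjoinRoot.lift_root _
  have hψinj : Function.Injective ψ := by
    rw [injective_iff_map_eq_zero]
    intro x hx
    obtain ⟨f, rfl⟩ := AdjoinRoot.mk_surjective x
    rw [hψdef, AdjoinRoot.lift_mk] at hx
    rw [AdjoinRoot.mk_eq_zero]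
    have hint : IsIntegral ℤ ζ := hζ.isIntegral hp.pos
    have hdvd : minpoly ℤ ζ ∣ f := minpoly.isIntegrallyClosed_dvd hint (by rwa [aeval_def])
    rwa [hΦdef, cyclotomic_eq_minpoly hζ hp.pos]
  -- the reduction to ZMod p
  have h1root : Φ.eval₂ (Int.castRingHom (ZMod p)) 1 = 0 := by
    rw [eval₂_at_one, hΦdef, eval_one_cyclotomic_prime]
    simp
  set φ : AdjoinRoot Φ →+* ZMod p :=
    AdjoinRoot.lift (Int.castRingHom (ZMod p)) 1 h1root with hφdef
  have hφθ : φ θ = 1 := AdjoinRoot.lift_root _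
  -- the element π = 1 - θ
  set π : AdjoinRoot Φ := 1 - θ with hπdef
  have hπ0 : π ≠ 0 := by
    intro h
    have h2 := congrArg ψ h
    rw [map_sub, map_one, hψθ, map_zero, sub_eq_zero] at h2
    exact hζ.ne_one hp.one_lt h2.symm
  have hπu : ¬ IsUnit π := by
    intro h
    have h2 := h.map φ
    rw [hπdef, map_sub, map_one, hφθ, sub_self] at h2
    simp at h2
  have hXπ : AdjoinRoot.mk Φ (X - C 1) = -π := by
    rw [C_1, map_sub, AdjoinRoot.mk_X, map_one, hπdef]; ring
  have hdvd1 : ∀ g : ℤ[X], (X - C 1 : ℤ[X]) ∣ g → π ∣ AdjoinRoot.mk Φ g := by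
    rintro g ⟨q, rfl⟩
    rw [map_mul, hXπ]
    exact ⟨-AdjoinRoot.mk Φ q, by ring⟩
  have hker : ∀ x, φ x = 0 → π ∣ x := by
    intro x hx
    obtain ⟨f, rfl⟩ := AdjoinRoot.mk_surjective x
    rw [hφdef, AdjoinRoot.lift_mk, eval₂_at_one] at hx
    obtain ⟨m, hm⟩ := (ZMod.intCast_zmod_eq_zero_iff_dvd _ p).mp hx
    have hpdvd : π ∣ AdjoinRoot.mk Φ (C ((p : ℤ))) := by
      have h1 : AdjoinRoot.mk Φ (C ((p : ℤ))) = AdjoinRoot.mk Φ (C (Φ.eval 1) - Φ) := by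
        rw [map_sub, AdjoinRoot.mk_self, sub_zero, hΦdef, eval_one_cyclotomic_prime]
      rw [h1]
      exact hdvd1 _ (by rw [dvd_iff_isRoot]; simp)
    have hsplit : AdjoinRoot.mk Φ f
        = AdjoinRoot.mk Φ (f - C (f.eval 1))
          + AdjoinRoot.mk Φ (C ((p : ℤ))) * AdjoinRoot.mk Φ (C m) := by
      rw [← map_mul, ← map_add, ← C_mul, ← hm]
      ring_nf
    rw [hsplit]
    exact dvd_add (hdvd1 _ (by rw [dvd_iff_isRoot]; simp)) (hpdvd.mul_right _)
  -- set up the matrix over the cyclotomic ring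
  set M : Matrix (Fin n) (Fin n) (AdjoinRoot Φ) :=
    Matrix.of fun i j => θ ^ ((a i).val * (b j).val) with hMdef
  intro hdet0
  have hmap : (RingHom.mapMatrix ψ) M
      = Matrix.of fun i j : Fin n => ζ ^ ((a i).val * (b j).val) := by
    ext i j
    simp [hMdef, RingHom.mapMatrix_apply, map_pow, hψθ]
  have hdetA : M.det = 0 := by
    apply hψinj
    rw [map_zero, RingHom.map_det, hmap]
    exact hdet0
  obtain ⟨v, hv0, hMv⟩ := Matrix.exists_mulVec_eq_zero_iff.mpr hdetA
  obtain ⟨w, hMw, j₁, hj₁⟩ := descent hπ0 hπu hv0 hMv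
  -- the sparse polynomial with the kernel vector as coefficients
  set f : (AdjoinRoot Φ)[X] := ∑ j, C (w j) * X ^ (b j).val with hfdef
  have hroots : ∀ i, f.IsRoot (θ ^ (a i).val) := by
    intro i
    have h3 := congrFun hMw i
    simp only [Matrix.mulVec, dotProduct, Pi.zero_apply, hMdef,
      Matrix.of_apply] at h3
    rw [IsRoot, hfdef, eval_finset_sum]
    simp only [eval_mul, eval_C, eval_pow, eval_X]
    rw [← h3]
    refine Finset.sum_congr rfl fun j _ => ?_
    rw [← pow_mul]
    ring
  have hrinj : Function.Injective fun i : Fin n => θ ^ (a i).val := by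
    intro i i' h
    apply ha
    apply ZMod.val_injective
    have h2 := congrArg ψ h
    simp only [map_pow, hψθ] at h2
    exact hζ.pow_inj (ZMod.val_lt _) (ZMod.val_lt _) h2
  have hprod : (∏ i, (X - C (θ ^ (a i).val))) ∣ f := by
    by_cases hf0 : f = 0
    · rw [hf0]; exact dvd_zero _
    · have heq : (∏ i, (X - C (θ ^ (a i).val)))
          = ((Finset.univ.val.map fun i : Fin n => θ ^ (a i).val).map
              fun x => X - C x).prod := by
        rw [Multiset.map_map]
        rfl
      rw [heq, Multiset.prod_X_sub_C_dvd_iff_le_roots hf0]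
      rw [Multiset.le_iff_subset (Multiset.Nodup.map hrinj Finset.univ.nodup)]
      intro x hx
      obtain ⟨i, _, rfl⟩ := Multiset.mem_map.mp hx
      exact Polynomial.mem_roots'.mpr ⟨hf0, hroots i⟩
  -- map everything to ZMod p
  have hmapdvd : ((X - 1 : (ZMod p)[X]) ^ n) ∣ ∑ j, C (φ (w j)) * X ^ (b j).val := by
    have h2 := Polynomial.map_dvd φ hprod
    have h3 : (∏ i, (X - C (θ ^ (a i).val))).map φ = (X - 1 : (ZMod p)[X]) ^ n := by
      rw [Polynomial.map_prod]
      have : ∀ i : Fin n, (X - C (θ ^ (a i).val)).map φ = (X - 1 : (ZMod p)[X]) := by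
        intro i
        simp [Polynomial.map_sub, map_pow, hφθ]
      rw [Finset.prod_congr rfl fun i _ => this i]
      simp
    have h4 : f.map φ = ∑ j, C (φ (w j)) * X ^ (b j).val := by
      rw [hfdef, Polynomial.map_sum]
      refine Finset.sum_congr rfl fun j _ => ?_
      simp
    rwa [h3, h4] at h2
  have hall0 := tao_lemma n b hb (fun j => φ (w j)) hmapdvd
  exact hj₁ (hker _ (hall0 j₁))

/-- Tao's uncertainty principle corollary: for `p` prime and `S, T ⊆ ℤ/p` with
`|S| = |T|`, the map sending a function supported on `S` to the restriction of
its Fourier transform to `T` is invertible (bijective). -/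
theorem stmt18 (p : ℕ) (hp : p.Prime) (S T : Finset (ZMod p)) (hST : S.card = T.card) :
    Function.Bijective (fun f : S → ℂ => fun ξ : T =>
      (1 / (p : ℂ)) * ∑ x : S, f x *
        Complex.exp (2 * (Real.pi : ℂ) * Complex.I *
          (((x : ZMod p).val : ℂ) * ((ξ : ZMod p).val : ℂ)) / p)) := by
  classical
  haveI : Fact p.Prime := ⟨hp⟩
  set ζ : ℂ := Complex.exp (2 * Real.pi * Complex.I / p) with hζdef
  have hexp : ∀ k l : ℕ, Complex.exp (2 * (Real.pi : ℂ) * Complex.I *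
      ((k : ℂ) * (l : ℂ)) / p) = ζ ^ (k * l) := by
    intro k l
    rw [hζdef, ← Complex.exp_nat_mul]
    congr 1
    push_cast
    ring
  set m : ℕ := T.card with hmdef
  have hTcard : Fintype.card T = m := by rw [Fintype.card_coe]
  let E : T ≃ S := Fintype.equivOfCardEq (by rw [Fintype.card_coe, Fintype.card_coe, hST])
  set N : Matrix T T ℂ := Matrix.of fun ξ η =>
    (1 / (p : ℂ)) * ζ ^ (((E η : ZMod p)).val * ((ξ : ZMod p)).val) with hNdef
  -- determinant of N is nonzero
  have hdetN : N.det ≠ 0 := by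
    have hN2 : N = ((1 : ℂ) / p) • Matrix.of fun ξ η : T =>
        ζ ^ (((E η : ZMod p)).val * ((ξ : ZMod p)).val) := by
      ext ξ η
      simp [hNdef]
    let eT : Fin m ≃ T := (Fintype.equivFinOfCardEq hTcard).symm
    have hcheb := chebotarev p hp (fun i => ((eT i : T) : ZMod p))
      (fun j => ((E (eT j) : S) : ZMod p))
      (fun i i' h => eT.injective (Subtype.coe_injective h))
      (fun j j' h => eT.injective (E.injective (Subtype.coe_injective h)))
    have hdet0 : (Matrix.of fun ξ η : T =>
        ζ ^ (((E η : ZMod p)).val * ((ξ : ZMod p)).val)).det ≠ 0 := by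
      rw [← Matrix.det_submatrix_equiv_self eT]
      have heq : ((Matrix.of fun ξ η : T =>
          ζ ^ (((E η : ZMod p)).val * ((ξ : ZMod p)).val)).submatrix eT eT)
          = Matrix.of fun i j : Fin m =>
            ζ ^ (((eT i : ZMod p)).val * ((E (eT j) : ZMod p)).val) := by
        ext i j
        simp only [Matrix.submatrix_apply, Matrix.of_apply]
        rw [Nat.mul_comm]
      rw [heq]
      exact hcheb
    rw [hN2, Matrix.det_smul]
    refine mul_ne_zero (pow_ne_zero _ ?_) hdet0
    simp only [one_div, ne_eq, inv_eq_zero, Nat.cast_eq_zero]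
    exact hp.ne_zero
  -- N.mulVec is bijective
  have hinj : Function.Injective N.mulVec := by
    intro u v huv
    by_contra hne
    exact hdetN (Matrix.exists_mulVec_eq_zero_iff.mp
      ⟨u - v, sub_ne_zero.mpr hne, by rw [Matrix.mulVec_sub, huv, sub_self]⟩)
  have hsurj : Function.Surjective N.mulVec := by
    have h2 : Function.Injective N.mulVecLin := by
      intro u v huv
      exact hinj huv
    have := LinearMap.injective_iff_surjective.mp h2
    intro y
    obtain ⟨x, hx⟩ := this y
    exact ⟨x, hx⟩
  -- the original map equals N.mulVec composed with a bijection
  have hpre : Function.Bijective (fun f : S → ℂ => (fun η : T => f (E η))) := by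
    constructor
    · intro f g h
      funext x
      have := congrFun h (E.symm x)
      simpa using this
    · intro g
      exact ⟨fun x => g (E.symm x), funext fun η => by simp⟩
  have hcomp : (fun f : S → ℂ => fun ξ : T =>
      (1 / (p : ℂ)) * ∑ x : S, f x *
        Complex.exp (2 * (Real.pi : ℂ) * Complex.I *
          (((x : ZMod p).val : ℂ) * ((ξ : ZMod p).val : ℂ)) / p))
      = N.mulVec ∘ (fun f : S → ℂ => (fun η : T => f (E η))) := by
    funext f ξ
    simp only [Function.comp_apply, Matrix.mulVec, dotProduct, hNdef,
      Matrix.of_apply]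
    have h1 : ∑ η : T, (1 / (p : ℂ)) *
          ζ ^ (((E η : ZMod p)).val * ((ξ : ZMod p)).val) * f (E η)
        = ∑ x : S, (1 / (p : ℂ)) *
          ζ ^ (((x : ZMod p)).val * ((ξ : ZMod p)).val) * f x :=
      Equiv.sum_comp E (fun x : S =>
        (1 / (p : ℂ)) * ζ ^ ((x : ZMod p).val * (ξ : ZMod p).val) * f x)
    rw [h1, Finset.mul_sum]
    refine Finset.sum_congr rfl fun x _ => ?_
    rw [hexp]
    ring
  rw [hcomp]
  exact Function.Bijective.comp ⟨hinj, hsurj⟩ hpre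
end

section
/- Let p be prime and m ≤ p. For the trigonometric polynomial g(t) = Σ_{k=1}^m a_k e^{2πi t k / p} with coefficients a ∈ ℂ^m, and any subset T ⊆ {0,1,...,p-1} with |T| ≥ m, the values (g(t))_{t ∈ T} determine the coefficient vector a uniquely; i.e., the sampling map a ↦ (Σ_{k=1}^m a_k e^{2πi t k/p})_{t∈T} is injective. -/
/-- For `p` prime, `m ≤ p`, and any `T ⊆ {0,…,p-1}` with `|T| ≥ m`, the values of
the trigonometric polynomial `g(t) = ∑_{k=1}^m a_k e^{2πi t k/p}` on `T`
determine the coefficient vector `a ∈ ℂ^m` uniquely. -/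
theorem stmt19 (p m : ℕ) (hp : p.Prime) (hm : m ≤ p)
    (T : Finset (Fin p)) (hT : m ≤ T.card) :
    Function.Injective (fun a : Fin m → ℂ => fun t : T =>
      ∑ k : Fin m, a k *
        Complex.exp (2 * (Real.pi : ℂ) * Complex.I *
          (((t : Fin p) : ℕ) : ℂ) * (((k : ℕ) : ℂ) + 1) / p)) := by
  classical
  have hp0 : (p : ℂ) ≠ 0 := Nat.cast_ne_zero.mpr hp.pos.ne'
  set ζ : ℂ := Complex.exp (2 * Real.pi * Complex.I / p) with hζdef
  have hprim : IsPrimitiveRoot ζ p := Complex.isPrimitiveRoot_exp p hp.pos.ne'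
  intro a b hab
  -- key exponential identity
  have hexp : ∀ (t : Fin p) (k : Fin m),
      Complex.exp (2 * (Real.pi : ℂ) * Complex.I *
          ((t : ℕ) : ℂ) * (((k : ℕ) : ℂ) + 1) / p) = (ζ ^ (t : ℕ)) ^ ((k : ℕ) + 1) := by
    intro t k
    rw [hζdef, ← Complex.exp_nat_mul, ← Complex.exp_nat_mul]
    congr 1
    push_cast
    field_simp
  set c : Fin m → ℂ := fun k => a k - b k with hc
  -- the difference polynomial
  set Q : Polynomial ℂ := ∑ k : Fin m, Polynomial.monomial ((k : ℕ) + 1) (c k) with hQ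
  have hdeg : Q.natDegree < m + 1 := by
    have : Q.natDegree ≤ m := by
      refine Polynomial.natDegree_sum_le_of_forall_le _ _ fun k _ => ?_
      exact le_trans (Polynomial.natDegree_monomial_le _) (Nat.succ_le_of_lt k.isLt)
    omega
  have heval : ∀ t ∈ T, Q.eval (ζ ^ (t : ℕ)) = 0 := by
    intro t ht
    have h1 := congrFun hab ⟨t, ht⟩
    simp only at h1
    have : ∑ k : Fin m, c k * (ζ ^ (t : ℕ)) ^ ((k : ℕ) + 1) = 0 := by
      have := sub_eq_zero.mpr h1
      rw [← Finset.sum_sub_distrib] at this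
      simp only [← sub_mul] at this
      calc ∑ k : Fin m, c k * (ζ ^ (t : ℕ)) ^ ((k : ℕ) + 1)
          = ∑ k : Fin m, (a k - b k) *
            Complex.exp (2 * (Real.pi : ℂ) * Complex.I *
              ((t : ℕ) : ℂ) * (((k : ℕ) : ℂ) + 1) / p) := by
            refine Finset.sum_congr rfl fun k _ => ?_
            rw [hexp t k]
        _ = 0 := this
    rw [hQ]
    simpa [Polynomial.eval_finset_sum] using this
  -- the root set
  set S : Finset ℂ := insert 0 (T.image fun t : Fin p => ζ ^ (t : ℕ)) with hS
  have hinj : Set.InjOn (fun t : Fin p => ζ ^ (t : ℕ)) T := by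
    intro x _ y _ hxy
    exact Fin.ext (hprim.pow_inj x.isLt y.isLt hxy)
  have hζ0 : ζ ≠ 0 := Complex.exp_ne_zero _
  have hcardS : m + 1 ≤ S.card := by
    rw [hS, Finset.card_insert_of_notMem, Finset.card_image_of_injOn hinj]
    · omega
    · simp only [Finset.mem_image, not_exists]
      intro t h
      exact pow_ne_zero _ hζ0 h.2
  have hevalS : ∀ x ∈ S, Q.eval x = 0 := by
    intro x hx
    rw [hS] at hx
    rcases Finset.mem_insert.mp hx with rfl | hx
    · rw [hQ]
      simp [Polynomial.eval_finset_sum]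
    · obtain ⟨t, ht, rfl⟩ := Finset.mem_image.mp hx
      exact heval t ht
  have hQ0 : Q = 0 :=
    Polynomial.eq_zero_of_natDegree_lt_card_of_eval_eq_zero' Q S hevalS
      (lt_of_lt_of_le hdeg hcardS)
  -- extract coefficients
  funext k
  have hcoeff : Q.coeff ((k : ℕ) + 1) = c k := by
    rw [hQ, Polynomial.finset_sum_coeff]
    rw [Finset.sum_eq_single k]
    · simp [Polynomial.coeff_monomial]
    · intro j _ hj
      rw [Polynomial.coeff_monomial, if_neg]
      intro h
      exact hj (Fin.ext (by omega))
    · simp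
  have : c k = 0 := by rw [← hcoeff, hQ0]; simp
  have := sub_eq_zero.mp (by simpa [hc] using this)
  exact this
end
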